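/- arXiv:1502.00327 — 7 statements merged into one kernel-verified Lean document; each statement's English description precedes it below -/
import Mathlib

section
/- Let P = (p_1,...,p_S) be a probability distribution, n ≥ 1, a > 0, and define the multinomial random vector (X_1,...,X_S) ∼ Multinomial(n; p_1,...,p_S) and p̂_{B,i} = (X_i + a)/(n + Sa), p_{B,i} = (n p_i + a)/(n + Sa). Then E[D(P̂_B ‖ P_B)] ≤ ln(1 + (S-1)/(n + Sa)). -/
/-!
By concavity of `log`, with the weights `P(X = k) · p̂_{B,i}(k)`,
`E[D(P̂_B ‖ P_B)] ≤ log E[∑ i, p̂_{B,i}² / p_{B,i}]`.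
The binomial moments `E[C(X_i, m)] = C(n, m) p_iᵐ` of a multinomial coordinate give
`E[(X_i + a)²] = n p_i (1 - p_i) + (n p_i + a)²`, so the argument of the logarithm is
`1 + ∑ i, n p_i (1 - p_i) / ((n + S a)(n p_i + a))`, and the `i`-th summand is at most
`(1 - p_i) / (n + S a)`.
-/

open Finset Polynomial

/-- Expectation of `g` of the counts of a Multinomial(n; p) random vector. -/
noncomputable def mExp (n S : ℕ) (p : Fin S → ℝ) (g : (Fin S → ℕ) → ℝ) : ℝ :=
  ∑ x : Fin S → Fin (n + 1),
    if (∑ i, ((x i : ℕ))) = n then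
      ((n.factorial : ℝ) / ∏ i, ((x i : ℕ).factorial : ℝ)) *
        (∏ i, p i ^ (x i : ℕ)) * g (fun i => (x i : ℕ))
    else 0

section

variable {ι R : Type*} [Fintype ι]

def multinomialWeight [CommSemiring R] (p : ι → R) (k : ι → ℕ) : R :=
  Nat.multinomial univ k * ∏ i, p i ^ k i

theorem sum_multinomialWeight_mul_choose [DecidableEq ι] [CommSemiring R] {p : ι → R}
    (hp : ∑ i, p i = 1) (n : ℕ) (i : ι) (m : ℕ) :
    ∑ k ∈ piAntidiag univ n, multinomialWeight p k * ((k i).choose m : R) =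
      n.choose m * p i ^ m := by
  -- coefficients of `X ^ m` in `(∑ j, p j * (X + 1) ^ [j = i]) ^ n = (1 + p i * X) ^ n`
  set f : ι → R[X] := fun j => C (p j) * if j = i then X + 1 else 1
  have hsum : ∑ j, f j = (X + 1).comp (C (p i) * X) := by
    have : ∀ j, f j = C (p j) + if j = i then C (p i) * X else 0 := by
      intro j; split_ifs with h <;> simp [f, h, mul_add, add_comm]
    simp only [Finset.sum_add_distrib, this, Finset.sum_ite_eq', mem_univ, if_true,
      ← map_sum, hp, map_one, add_comp, X_comp, one_comp, add_comm]
  have hprod : ∀ k : ι → ℕ, ∏ j, f j ^ k j = C (∏ j, p j ^ k j) * (X + 1) ^ k i := by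
    intro k
    simp only [f, mul_pow, prod_mul_distrib, ← C_pow, ← map_prod, ite_pow, one_pow,
      prod_ite_eq', mem_univ, if_true]
  have := congrArg (coeff · m) (sum_pow_eq_sum_piAntidiag univ f n)
  simp only [hsum, ← pow_comp, comp_C_mul_X_coeff, coeff_X_add_one_pow, hprod,
    finsetSum_coeff, ← C_eq_natCast, ← mul_assoc, ← map_mul, coeff_C_mul] at this
  exact this.symm

theorem sum_multinomialWeight [DecidableEq ι] [CommSemiring R] {p : ι → R}
    (hp : ∑ i, p i = 1) (n : ℕ) :
    ∑ k ∈ piAntidiag univ n, multinomialWeight p k = 1 := by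
  simpa [hp, multinomialWeight] using (sum_pow_eq_sum_piAntidiag univ p n).symm

theorem multinomialWeight_nonneg {p : ι → ℝ} (hp : ∀ i, 0 ≤ p i) (k : ι → ℕ) :
    0 ≤ multinomialWeight p k :=
  mul_nonneg (Nat.cast_nonneg _) (prod_nonneg fun i _ => pow_nonneg (hp i) _)

theorem sum_multinomialWeight_mul_add_sq [DecidableEq ι] {p : ι → ℝ} (hp : ∑ i, p i = 1)
    (n : ℕ) (i : ι) (a : ℝ) :
    ∑ k ∈ piAntidiag univ n, multinomialWeight p k * ((k i : ℝ) + a) ^ 2 =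
      n * p i * (1 - p i) + (n * p i + a) ^ 2 := by
  have hsq : ∀ x : ℕ, ((x : ℝ) + a) ^ 2 =
      2 * (x.choose 2 : ℝ) + (1 + 2 * a) * (x.choose 1 : ℝ) + a ^ 2 * (x.choose 0 : ℝ) := by
    intro x
    rw [Nat.cast_choose_two, Nat.choose_one_right, Nat.choose_zero_right]
    push_cast
    ring
  calc ∑ k ∈ piAntidiag univ n, multinomialWeight p k * ((k i : ℝ) + a) ^ 2
      = 2 * ∑ k ∈ piAntidiag univ n, multinomialWeight p k * ((k i).choose 2 : ℝ)
        + (1 + 2 * a) * ∑ k ∈ piAntidiag univ n, multinomialWeight p k * ((k i).choose 1 : ℝ)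
        + a ^ 2 * ∑ k ∈ piAntidiag univ n, multinomialWeight p k * ((k i).choose 0 : ℝ) := by
        rw [mul_sum, mul_sum, mul_sum, ← sum_add_distrib, ← sum_add_distrib]
        refine sum_congr rfl fun k _ => ?_
        rw [hsq]
        ring
    _ = n * p i * (1 - p i) + (n * p i + a) ^ 2 := by
        rw [sum_multinomialWeight_mul_choose hp, sum_multinomialWeight_mul_choose hp,
          sum_multinomialWeight_mul_choose hp, Nat.cast_choose_two]
        simp only [Nat.choose_one_right, Nat.choose_zero_right, Nat.cast_one]
        ring

theorem mExp_eq_sum_multinomialWeight (n S : ℕ) (p : Fin S → ℝ) (g : (Fin S → ℕ) → ℝ) :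
    mExp n S p g = ∑ k ∈ piAntidiag univ n, multinomialWeight p k * g k := by
  have hle : ∀ k ∈ piAntidiag (univ : Finset (Fin S)) n, ∀ i, k i ≤ n := fun k hk i =>
    (mem_piAntidiag.mp hk).1 ▸ single_le_sum (fun j _ => Nat.zero_le (k j)) (mem_univ i)
  rw [mExp, ← sum_filter]
  refine sum_nbij' (fun x i => (x i : ℕ)) (fun k i => ⟨min (k i) n, by omega⟩)
    ?_ ?_ ?_ ?_ ?_
  · intro x hx
    simpa [mem_piAntidiag] using (mem_filter.mp hx).2
  · intro k hk
    simpa [min_eq_left (hle k hk _)] using (mem_piAntidiag.mp hk).1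
  · intro x _
    funext i
    exact Fin.ext (min_eq_left (Nat.lt_succ_iff.mp (x i).isLt))
  · intro k hk
    funext i
    exact min_eq_left (hle k hk i)
  · intro x hx
    have hsum : ∑ i, (x i : ℕ) = n := (mem_filter.mp hx).2
    have hfac : (∏ i, ((x i : ℕ).factorial : ℝ)) ≠ 0 := by positivity
    have hmult : (Nat.multinomial univ (fun i => (x i : ℕ)) : ℝ) =
        n.factorial / ∏ i, ((x i : ℕ).factorial : ℝ) := by
      rw [eq_div_iff hfac, mul_comm, ← Nat.cast_prod, ← Nat.cast_mul, Nat.multinomial_spec, hsum]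
    rw [multinomialWeight, hmult]

theorem sum_mul_sum_mul_log_div_le_log {κ : Type*} (s : Finset κ) {c : κ → ℝ}
    (hc : ∀ k ∈ s, 0 ≤ c k) (hc1 : ∑ k ∈ s, c k = 1) {P : κ → ι → ℝ}
    (hP : ∀ k ∈ s, ∀ i, 0 < P k i) (hP1 : ∀ k ∈ s, ∑ i, P k i = 1) {q : ι → ℝ}
    (hq : ∀ i, 0 < q i) :
    ∑ k ∈ s, c k * ∑ i, P k i * Real.log (P k i / q i) ≤
      Real.log (∑ k ∈ s, c k * ∑ i, P k i ^ 2 / q i) := by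
  have hw1 : ∑ z ∈ s ×ˢ univ, c z.1 * P z.1 z.2 = 1 := by
    rw [sum_product, ← hc1]
    refine sum_congr rfl fun k hk => ?_
    simp only [← mul_sum, hP1 k hk, mul_one]
  have hjensen := strictConcaveOn_log_Ioi.concaveOn.le_map_sum
    (fun z hz => mul_nonneg (hc z.1 (mem_product.mp hz).1) (hP z.1 (mem_product.mp hz).1 z.2).le)
    hw1 (p := fun z => P z.1 z.2 / q z.2)
    (fun z hz => Set.mem_Ioi.mpr (div_pos (hP z.1 (mem_product.mp hz).1 z.2) (hq z.2)))
  simp only [smul_eq_mul, sum_product, mul_assoc, ← mul_sum, mul_div_assoc', ← sq] at hjensen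
  simpa only [mul_div_assoc, ← mul_sum] using hjensen

theorem sum_multinomialWeight_mul_sum_sq_div_eq [DecidableEq ι] {p : ι → ℝ}
    (hp : ∀ i, 0 ≤ p i) (hps : ∑ i, p i = 1) (n : ℕ) {a : ℝ} (ha : 0 < a) {N : ℝ}
    (hN : n + Fintype.card ι * a = N) :
    ∑ k ∈ piAntidiag univ n, multinomialWeight p k *
        ∑ i, (((k i : ℝ) + a) / N) ^ 2 / ((n * p i + a) / N) =
      1 + ∑ i, n * p i * (1 - p i) / (N * (n * p i + a)) := by
  have hN0 : 0 < N := by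
    have : 0 < Fintype.card ι :=
      card_pos.mpr (nonempty_of_sum_ne_zero (by rw [hps]; exact one_ne_zero))
    rw [← hN]
    positivity
  have hq : ∀ i, 0 < n * p i + a := fun i => by have := hp i; positivity
  have hmean : ∑ i, (n * p i + a) / N = 1 := by
    rw [← sum_div, sum_add_distrib, ← mul_sum, hps, sum_const, card_univ, nsmul_eq_mul,
      mul_one, hN, div_self hN0.ne']
  calc ∑ k ∈ piAntidiag univ n, multinomialWeight p k *
        ∑ i, (((k i : ℝ) + a) / N) ^ 2 / ((n * p i + a) / N)
      = ∑ i, (∑ k ∈ piAntidiag univ n, multinomialWeight p k * ((k i : ℝ) + a) ^ 2) /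
          (N * (n * p i + a)) := by
        simp only [mul_sum, sum_div]
        rw [sum_comm]
        refine sum_congr rfl fun i _ => sum_congr rfl fun k _ => ?_
        field_simp [(hq i).ne']
    _ = ∑ i, ((n * p i + a) / N + n * p i * (1 - p i) / (N * (n * p i + a))) := by
        refine sum_congr rfl fun i _ => ?_
        rw [sum_multinomialWeight_mul_add_sq hps]
        field_simp [(hq i).ne']
        ring
    _ = 1 + ∑ i, n * p i * (1 - p i) / (N * (n * p i + a)) := by
        rw [sum_add_distrib, hmean]

theorem sum_mul_one_sub_div_mem_Icc {p : ι → ℝ} (hp : ∀ i, 0 ≤ p i) (hps : ∑ i, p i = 1)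
    (n : ℕ) {a : ℝ} (ha : 0 < a) {N : ℝ} (hN : 0 < N) :
    ∑ i, n * p i * (1 - p i) / (N * (n * p i + a)) ∈ Set.Icc 0 ((Fintype.card ι - 1) / N) := by
  have hterm : ∀ i, n * p i * (1 - p i) / (N * (n * p i + a)) ∈ Set.Icc 0 ((1 - p i) / N) := by
    intro i
    have hpi := hp i
    have hpi1 : 0 ≤ 1 - p i := by
      linarith [hps ▸ single_le_sum (fun j _ => hp j) (mem_univ i)]
    refine ⟨by positivity, ?_⟩
    rw [div_le_div_iff₀ (by positivity) hN]
    have : n * p i * (1 - p i) * N ≤ (n * p i + a) * (1 - p i) * N := by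
      gcongr
      linarith
    linarith
  have hsum : ∑ i, (1 - p i) / N = (Fintype.card ι - 1) / N := by
    rw [← sum_div, sum_sub_distrib, hps, sum_const, card_univ, nsmul_one]
  exact ⟨sum_nonneg fun i _ => (hterm i).1, hsum ▸ sum_le_sum fun i _ => (hterm i).2⟩

end

theorem stmt4_general (n S : ℕ) (a : ℝ) (ha : 0 < a)
    (p : Fin S → ℝ) (hp : ∀ i, 0 ≤ p i) (hps : ∑ i, p i = 1) :
    mExp n S p (fun x => ∑ i,
        (((x i : ℝ) + a) / ((n : ℝ) + S * a)) *
          Real.log ((((x i : ℝ) + a) / ((n : ℝ) + S * a)) /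
            (((n : ℝ) * p i + a) / ((n : ℝ) + S * a))))
      ≤ Real.log (1 + ((S : ℝ) - 1) / ((n : ℝ) + S * a)) := by
  set N : ℝ := n + S * a
  have hcard : n + Fintype.card (Fin S) * a = N := by simp [N]
  have hS : 0 < S := Nat.pos_of_ne_zero (by rintro rfl; simp at hps)
  have hN : 0 < N := by positivity
  have hq : ∀ i, 0 < (n * p i + a) / N := fun i => by have := hp i; positivity
  have hP : ∀ (k : Fin S → ℕ) i, 0 < ((k i : ℝ) + a) / N := fun k i => by positivity
  have hP1 : ∀ k ∈ piAntidiag (univ : Finset (Fin S)) n, ∑ i, ((k i : ℝ) + a) / N = 1 := by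
    intro k hk
    rw [← sum_div, sum_add_distrib, ← Nat.cast_sum, (mem_piAntidiag.mp hk).1, sum_const,
      card_univ, nsmul_eq_mul, hcard, div_self hN.ne']
  obtain ⟨hV0, hV⟩ := sum_mul_one_sub_div_mem_Icc hp hps n ha hN
  rw [Fintype.card_fin] at hV
  rw [mExp_eq_sum_multinomialWeight]
  refine (sum_mul_sum_mul_log_div_le_log _ (fun k _ => multinomialWeight_nonneg hp k)
    (sum_multinomialWeight hps n) (fun k _ => hP k) hP1 hq).trans ?_
  rw [sum_multinomialWeight_mul_sum_sq_div_eq hp hps n ha hcard]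
  exact Real.log_le_log (by linarith) (by linarith)

/-- E[D(P̂_B ‖ P_B)] ≤ ln(1 + (S-1)/(n+Sa)) for the Dirichlet-smoothed estimate
p̂_{B,i} = (X_i + a)/(n + Sa) of a multinomial sample. -/
theorem stmt4 (n S : ℕ) (hn : 1 ≤ n) (hS : 2 ≤ S) (a : ℝ) (ha : 0 < a)
    (p : Fin S → ℝ) (hp : ∀ i, 0 ≤ p i) (hps : ∑ i, p i = 1) :
    mExp n S p (fun x => ∑ i,
        (((x i : ℝ) + a) / ((n : ℝ) + S * a)) *
          Real.log ((((x i : ℝ) + a) / ((n : ℝ) + S * a)) /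
            (((n : ℝ) * p i + a) / ((n : ℝ) + S * a))))
      ≤ Real.log (1 + ((S : ℝ) - 1) / ((n : ℝ) + S * a)) :=
  stmt4_general n S a ha p hp hps
end

section
/- Let P = (p_1,...,p_S) be a probability distribution, n ≥ Sa with a > 0, and P_B = (n/(n+Sa))·P + (Sa/(n+Sa))·U where U is the uniform distribution on S elements. Then |H(P_B) - H(P)| ≤ (2Sa/(n+Sa))·ln((n+Sa)/(2a)). -/
/-!
Write `η x = -x log x` and `t = Sa/(n+Sa) ≤ 1/2`, so that `P_B - P = t (U - P)`. Since `η` is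
concave, its increment `η (x + d) - η x` decreases in `x`; together with `η (1 - d) ≤ η d` for
`d ≤ 1/2` this gives `|η q - η p| ≤ η |q - p|`. The deviations `t |1/S - p_i|` have total mass at
most `2t`, and the tangent line of `η` at `2t/S` bounds the sum of their `η`-values by
`2t log (S/(2t))`.
-/

open Real Finset

theorem ConcaveOn.map_add_sub_map_le {s : Set ℝ} {f : ℝ → ℝ} (hf : ConcaveOn ℝ s f)
    {x y d : ℝ} (hx : x ∈ s) (hyd : y + d ∈ s) (hxy : x ≤ y) (hd : 0 ≤ d) :
    f (y + d) - f y ≤ f (x + d) - f x := by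
  rcases hxy.eq_or_lt with rfl | hxy
  · rfl
  rcases hd.eq_or_lt with rfl | hd
  · simp
  have hs := hf.1.ordConnected
  have hxd : x + d ∈ s := hs.out hx hyd ⟨by linarith, by linarith⟩
  have hy : y ∈ s := hs.out hx hyd ⟨by linarith, by linarith⟩
  have h₁ : slope f x (y + d) ≤ slope f x (x + d) :=
    hf.slope_anti hx ⟨hxd, by simpa using hd.ne'⟩ ⟨hyd, by simp; linarith⟩ (by linarith)
  have h₂ : slope f (y + d) y ≤ slope f (y + d) x :=
    hf.slope_anti hyd ⟨hx, by simp; linarith⟩ ⟨hy, by simp; linarith⟩ hxy.le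
  have key : slope f y (y + d) ≤ slope f x (x + d) :=
    calc slope f y (y + d) = slope f (y + d) y := slope_comm ..
      _ ≤ slope f (y + d) x := h₂
      _ = slope f x (y + d) := slope_comm ..
      _ ≤ slope f x (x + d) := h₁
  rwa [slope_def_field, slope_def_field, add_sub_cancel_left, add_sub_cancel_left,
    div_le_div_iff_of_pos_right hd] at key

namespace Real

theorem negMulLog_le_tangent {x c : ℝ} (hx : 0 ≤ x) (hc : 0 < c) :
    negMulLog x ≤ x * (-log c - 1) + c := by
  have h := negMulLog_le_one_sub_self (div_nonneg hx hc.le)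
  have e : negMulLog x = c * negMulLog (x / c) - x * log c := by
    have := negMulLog_mul (x / c) c
    rw [div_mul_cancel₀ x hc.ne'] at this
    rw [this, show negMulLog c = -c * log c from rfl]
    field_simp
    ring
  rw [e]
  have : c * negMulLog (x / c) ≤ c * (1 - x / c) := mul_le_mul_of_nonneg_left h hc.le
  rw [mul_sub, mul_div_cancel₀ x hc.ne'] at this
  linarith

theorem negMulLog_one_sub_le {d : ℝ} (hd : 0 ≤ d) (hd2 : d ≤ 1 / 2) :
    negMulLog (1 - d) ≤ negMulLog d := by
  rcases hd.eq_or_lt with rfl | hd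
  · simp
  -- for `d ≤ 1/e` compare both sides with `d`, otherwise use the tangent of `η` at `d`
  rcases le_total (log d) (-1) with hl | hl
  · have h₁ := negMulLog_le_one_sub_self (x := 1 - d) (by linarith)
    have h₂ : d ≤ negMulLog d := by rw [negMulLog]; nlinarith
    linarith
  · have := negMulLog_le_tangent (x := 1 - d) (by linarith) hd
    have : (1 - 2 * d) * (-log d - 1) ≤ 0 :=
      mul_nonpos_of_nonneg_of_nonpos (by linarith) (by linarith)
    simp only [negMulLog] at *
    nlinarith

theorem abs_negMulLog_add_sub_le {x d : ℝ} (hx : 0 ≤ x) (hd : 0 ≤ d) (hd2 : d ≤ 1 / 2)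
    (hxd : x + d ≤ 1) : |negMulLog (x + d) - negMulLog x| ≤ negMulLog d := by
  have hη := concaveOn_negMulLog
  have upper :=
    hη.map_add_sub_map_le (x := 0) (y := x) (Set.mem_Ici.2 le_rfl) (by simp; linarith) hx hd
  have lower := hη.map_add_sub_map_le (x := x) (y := 1 - d) hx (by simp) (by linarith) hd
  have := negMulLog_one_sub_le hd hd2
  simp only [zero_add, negMulLog_zero, sub_zero, sub_add_cancel, negMulLog_one] at upper lower
  rw [abs_le]
  constructor <;> linarith

theorem abs_negMulLog_sub_le {p q : ℝ} (hp : 0 ≤ p) (hq : 0 ≤ q) (hp1 : p ≤ 1) (hq1 : q ≤ 1)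
    (hpq : |q - p| ≤ 1 / 2) : |negMulLog q - negMulLog p| ≤ negMulLog |q - p| := by
  wlog h : p ≤ q generalizing p q
  · rw [abs_sub_comm, abs_sub_comm q p] at *
    exact this hq hp hq1 hp1 hpq (le_of_not_ge h)
  obtain ⟨d, hd, rfl⟩ : ∃ d, 0 ≤ d ∧ q = p + d := ⟨q - p, by linarith, by ring⟩
  rw [add_sub_cancel_left, abs_of_nonneg hd] at *
  exact abs_negMulLog_add_sub_le hp hd hpq hq1

theorem sum_negMulLog_le {ι : Type*} [Fintype ι] {d : ι → ℝ} {B : ℝ} (hd : ∀ i, 0 ≤ d i)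
    (hdB : ∑ i, d i ≤ B) (hB : 0 < B) (hlog : 1 ≤ log (Fintype.card ι / B)) :
    ∑ i, negMulLog (d i) ≤ B * log (Fintype.card ι / B) := by
  have hcard : (0 : ℝ) < Fintype.card ι :=
    Nat.cast_pos.2 (Nat.pos_of_ne_zero fun h => by norm_num [h] at hlog)
  set L := log (Fintype.card ι / B)
  have hc : -log (B / Fintype.card ι) = L := by rw [← log_inv, inv_div]
  calc ∑ i, negMulLog (d i) ≤ ∑ i, (d i * (L - 1) + B / Fintype.card ι) :=
        sum_le_sum fun i _ => hc ▸ negMulLog_le_tangent (hd i) (div_pos hB hcard)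
    _ = (∑ i, d i) * (L - 1) + B := by
        rw [sum_add_distrib, ← sum_mul, sum_const, card_univ, nsmul_eq_mul,
          mul_div_cancel₀ B hcard.ne']
    _ ≤ B * (L - 1) + B := by gcongr
    _ = B * L := by ring

theorem abs_negMulLog_convexComb_sub_le {p u t : ℝ} (hp0 : 0 ≤ p) (hp1 : p ≤ 1) (hu0 : 0 ≤ u)
    (hu1 : u ≤ 1) (ht0 : 0 ≤ t) (ht : t ≤ 1 / 2) :
    |negMulLog ((1 - t) * p + t * u) - negMulLog p| ≤ negMulLog (t * |u - p|) := by
  have hdist : |(1 - t) * p + t * u - p| = t * |u - p| := by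
    rw [show (1 - t) * p + t * u - p = t * (u - p) by ring, abs_mul, abs_of_nonneg ht0]
  have hup : |u - p| ≤ 1 := abs_sub_le_iff.2 ⟨by linarith, by linarith⟩
  rw [← hdist]
  refine abs_negMulLog_sub_le hp0 (by nlinarith) hp1 (by nlinarith) ?_
  rw [hdist]
  nlinarith [abs_nonneg (u - p)]

theorem one_le_log_of_three_le {x : ℝ} (hx : 3 ≤ x) : 1 ≤ log x := by
  rw [le_log_iff_exp_le (by linarith)]
  linarith [exp_one_lt_d9]

theorem sum_abs_inv_card_sub_le_two {ι : Type*} [Fintype ι] [Nonempty ι] {p : ι → ℝ}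
    (hp : ∀ i, 0 ≤ p i) (hps : ∑ i, p i = 1) :
    ∑ i, |1 / (Fintype.card ι : ℝ) - p i| ≤ 2 := by
  calc ∑ i, |1 / (Fintype.card ι : ℝ) - p i| ≤ ∑ i, (1 / (Fintype.card ι : ℝ) + p i) :=
        sum_le_sum fun i _ => (abs_sub _ _).trans_eq <| by
          rw [abs_of_nonneg (by positivity), abs_of_nonneg (hp i)]
    _ = 2 := by
        rw [sum_add_distrib, hps, sum_const, card_univ, nsmul_eq_mul, mul_one_div_cancel]
        · norm_num
        · exact_mod_cast Fintype.card_ne_zero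

theorem sum_negMulLog_mul_abs_inv_card_sub_le {ι : Type*} [Fintype ι]
    (hcard : 2 ≤ Fintype.card ι) {p : ι → ℝ} (hp : ∀ i, 0 ≤ p i) (hps : ∑ i, p i = 1)
    {t : ℝ} (ht0 : 0 < t) (ht : t ≤ 1 / 2) :
    ∑ i, negMulLog (t * |1 / (Fintype.card ι : ℝ) - p i|) ≤
      2 * t * log (Fintype.card ι / (2 * t)) := by
  have : Nonempty ι := Fintype.card_pos_iff.1 (by omega)
  have hd : ∀ i, 0 ≤ t * |1 / (Fintype.card ι : ℝ) - p i| := fun i => by positivity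
  rcases hcard.eq_or_lt with hcard | hcard
  -- for two points the tangent argument needs the sharper mass bound `t` instead of `2t`
  · have h2 : (Fintype.card ι : ℝ) = 2 := by exact_mod_cast hcard.symm
    have hsum : ∑ i, t * |1 / (Fintype.card ι : ℝ) - p i| ≤ t := by
      have hp1 : ∀ i, p i ≤ 1 := fun i =>
        hps ▸ single_le_sum (fun j _ => hp j) (mem_univ i)
      calc ∑ i, t * |1 / (Fintype.card ι : ℝ) - p i| ≤ ∑ _i : ι, t * (1 / 2) :=
            sum_le_sum fun i _ => by
              rw [h2]; gcongr; exact abs_sub_le_iff.2 ⟨by linarith [hp i], by linarith [hp1 i]⟩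
        _ = t := by rw [sum_const, card_univ, nsmul_eq_mul, h2]; ring
    have hlog : 1 ≤ log (Fintype.card ι / t) := by
      refine one_le_log_of_three_le ?_
      rw [h2, le_div_iff₀ ht0]
      linarith
    have hlog2t : log 2 + log t ≤ 0 := by
      rw [← log_mul two_ne_zero ht0.ne']
      exact log_nonpos (by positivity) (by linarith)
    calc ∑ i, negMulLog (t * |1 / (Fintype.card ι : ℝ) - p i|)
        ≤ t * log (Fintype.card ι / t) := sum_negMulLog_le hd hsum ht0 hlog
      _ ≤ 2 * t * log (Fintype.card ι / (2 * t)) := by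
        rw [h2, log_div two_ne_zero ht0.ne', div_mul_cancel_left₀ two_ne_zero, log_inv]
        nlinarith
  · refine sum_negMulLog_le hd ?_ (by positivity) (one_le_log_of_three_le ?_)
    · rw [← mul_sum]
      nlinarith [sum_abs_inv_card_sub_le_two hp hps]
    · have h3 : (3 : ℝ) ≤ Fintype.card ι := by exact_mod_cast hcard
      rw [le_div_iff₀ (by positivity)]
      nlinarith

end Real

/-- For n ≥ Sa (a > 0) and P_B = (n/(n+Sa))·P + (Sa/(n+Sa))·Uniform(S),
|H(P_B) - H(P)| ≤ (2Sa/(n+Sa))·ln((n+Sa)/(2a)). -/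
theorem stmt5 (S n : ℕ) (hS : 2 ≤ S) (a : ℝ) (ha : 0 < a) (hna : (S : ℝ) * a ≤ n)
    (p : Fin S → ℝ) (hp : ∀ i, 0 ≤ p i) (hps : ∑ i, p i = 1) :
    |(-∑ i, (((n : ℝ) / ((n : ℝ) + S * a)) * p i +
          ((S : ℝ) * a / ((n : ℝ) + S * a)) * (1 / (S : ℝ))) *
        Real.log (((n : ℝ) / ((n : ℝ) + S * a)) * p i +
          ((S : ℝ) * a / ((n : ℝ) + S * a)) * (1 / (S : ℝ))))
      - (-∑ i, p i * Real.log (p i))|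
      ≤ (2 * S * a / ((n : ℝ) + S * a)) * Real.log (((n : ℝ) + S * a) / (2 * a)) := by
  have hS0 : (0 : ℝ) < S := by positivity
  have hN : 0 < (n : ℝ) + S * a := by positivity
  set t := (S : ℝ) * a / ((n : ℝ) + S * a)
  have ht0 : 0 < t := by positivity
  have ht : t ≤ 1 / 2 := by rw [div_le_iff₀ hN]; linarith
  rw [show (n : ℝ) / ((n : ℝ) + S * a) = 1 - t by simp only [t]; field_simp; ring,
    show 2 * (S : ℝ) * a / ((n : ℝ) + S * a) = 2 * t by ring,
    show ((n : ℝ) + S * a) / (2 * a) = S / (2 * t) by simp only [t]; field_simp]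
  have hp1 : ∀ i, p i ≤ 1 := fun i => hps ▸ single_le_sum (fun j _ => hp j) (mem_univ i)
  calc _ = |∑ i, (negMulLog ((1 - t) * p i + t * (1 / S)) - negMulLog (p i))| := by
        simp only [negMulLog_eq_neg, sum_sub_distrib, sum_neg_distrib]
    _ ≤ ∑ i, |negMulLog ((1 - t) * p i + t * (1 / S)) - negMulLog (p i)| :=
        abs_sum_le_sum_abs _ _
    _ ≤ ∑ i, negMulLog (t * |1 / (S : ℝ) - p i|) := sum_le_sum fun i _ =>
        abs_negMulLog_convexComb_sub_le (hp i) (hp1 i) (by positivity)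
          ((div_le_one hS0).2 (by exact_mod_cast hS.trans' one_le_two)) ht0.le ht
    _ ≤ 2 * t * log (S / (2 * t)) := by
        simpa only [Fintype.card_fin] using
          sum_negMulLog_mul_abs_inv_card_sub_le (by simpa using hS) hp hps ht0 ht
end

section
/- If x, y ∈ [0,1] and |x - y| ≤ 1/2, then |x ln x - y ln y| ≤ -|x - y| · ln |x - y|, with the convention 0·ln 0 = 0. -/
/-!
Write `f = negMulLog`, i.e. `f t = -t log t`, which is concave on `[0, ∞)` with `f 0 = f 1 = 0`.
For a concave function the increment over an interval of fixed length `d` decreases as the interval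
moves right, so comparing `[y, y + d]` with `[0, d]` and with `[1 - d, 1]` gives
`-f (1 - d) ≤ f (y + d) - f y ≤ f d`. Finally `f (1 - d) ≤ f d` for `d ≤ 1/2`: after dividing by
`d (1 - d)` this says that the secant slope of `log` through `1` is larger at `d` than at `1 - d`.
-/

open Real

theorem ConcaveOn.map_add_sub_map_le_s7 {𝕜 : Type*} [Field 𝕜] [LinearOrder 𝕜] [IsStrictOrderedRing 𝕜]
    {s : Set 𝕜} {f : 𝕜 → 𝕜} (hf : ConcaveOn 𝕜 s f) {a b d : 𝕜} (ha : a ∈ s) (hbd : b + d ∈ s)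
    (hab : a ≤ b) (hd : 0 ≤ d) : f (b + d) - f b ≤ f (a + d) - f a := by
  rcases hd.eq_or_lt with rfl | hd
  · simp
  have hL : 0 < b + d - a := by linarith
  set t := d / (b + d - a) with ht
  have ht0 : 0 ≤ t := by positivity
  have ht1 : t ≤ 1 := by rw [ht, div_le_one hL]; linarith
  -- `b` and `a + d` are the convex combinations of `a` and `b + d` with swapped weights `t`, `1 - t`
  have hb : t • a + (1 - t) • (b + d) = b := by
    simp only [smul_eq_mul, ht]; field_simp; ring
  have had : (1 - t) • a + t • (b + d) = a + d := by
    simp only [smul_eq_mul, ht]; field_simp; ring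
  have h₁ := hf.2 ha hbd ht0 (sub_nonneg.2 ht1) (by ring)
  have h₂ := hf.2 ha hbd (sub_nonneg.2 ht1) ht0 (by ring)
  rw [hb] at h₁
  rw [had] at h₂
  simp only [smul_eq_mul] at h₁ h₂
  linarith

theorem Real.negMulLog_one_sub_le_s7 {d : ℝ} (hd0 : 0 ≤ d) (hd : d ≤ 1 / 2) :
    negMulLog (1 - d) ≤ negMulLog d := by
  rcases hd0.eq_or_lt with rfl | hd0
  · simp
  have h1d : 0 < 1 - d := by linarith
  have hslope := strictConcaveOn_log_Ioi.concaveOn.slope_anti (x := 1) (by norm_num)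
    ⟨Set.mem_Ioi.2 hd0, by simp; linarith⟩ ⟨Set.mem_Ioi.2 h1d, by simp; linarith⟩ (by linarith)
  simp only [slope_def_field, log_one, sub_zero, sub_sub_cancel_left] at hslope
  rw [div_neg, ← neg_sub 1 d, div_neg, neg_le_neg_iff, div_le_div_iff₀ h1d hd0] at hslope
  simp only [negMulLog, neg_mul, neg_le_neg_iff]
  linarith

theorem Real.abs_negMulLog_sub_le_s7 {x y : ℝ} (hy : 0 ≤ y) (hyx : y ≤ x) (hx : x ≤ 1)
    (hxy : x - y ≤ 1 / 2) : |negMulLog x - negMulLog y| ≤ negMulLog (x - y) := by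
  have hf := concaveOn_negMulLog
  obtain ⟨d, hd, rfl⟩ : ∃ d, 0 ≤ d ∧ x = y + d := ⟨x - y, by linarith, by ring⟩
  rw [add_sub_cancel_left] at hxy ⊢
  rw [abs_le]
  constructor
  · have := hf.map_add_sub_map_le_s7 (a := y) (b := 1 - d) hy (by simp) (by linarith) hd
    rw [sub_add_cancel, negMulLog_one] at this
    linarith [negMulLog_one_sub_le_s7 hd hxy]
  · have := hf.map_add_sub_map_le_s7 (a := 0) (b := y) (d := d) Set.self_mem_Ici
      (Set.mem_Ici.2 (by linarith)) hy hd
    rw [zero_add, negMulLog_zero] at this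
    linarith

/-- If x, y ∈ [0,1] and |x - y| ≤ 1/2 then |x ln x - y ln y| ≤ -|x-y| ln|x-y|
(with 0·ln 0 = 0, automatic since `Real.log 0 = 0`). -/
theorem stmt7 (x y : ℝ) (hx : x ∈ Set.Icc (0 : ℝ) 1) (hy : y ∈ Set.Icc (0 : ℝ) 1)
    (hxy : |x - y| ≤ 1 / 2) :
    |x * Real.log x - y * Real.log y| ≤ -|x - y| * Real.log |x - y| := by
  wlog hyx : y ≤ x generalizing x y
  · rw [abs_sub_comm x y, abs_sub_comm (x * log x)] at *
    exact this y x hy hx hxy (le_of_not_ge hyx)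
  rw [abs_of_nonneg (sub_nonneg.2 hyx)] at hxy ⊢
  have h := abs_negMulLog_sub_le_s7 hy.1 hyx hx.2 hxy
  simp only [negMulLog] at h
  rwa [abs_sub_comm, neg_mul, neg_mul, neg_sub_neg] at h
end

section
/- For f(x) = -x ln x on [0,1] (with f(0)=0) and any h with 0 < h ≤ 1, the second-order Ditzian–Totik modulus of smoothness with weight φ(x) = √(x(1-x)) satisfies ω₂^φ(f, h) = h² ln 4 / (1 + h²). -/
/-! Write `u = m(1+t)`, `v = m(1-t)` with `m = (u+v)/2` and `|t| ≤ 1`. The second difference of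
`-x log x` is then `-m ψ(t)` with `ψ(t) = symmMulLog t = (1+t) log(1+t) + (1-t) log(1-t)`, and the weight
condition `|u - v| ≤ 2h φ(m)` becomes `m t² ≤ h² (1-m)`. Since `ψ(t)/t²` increases on `(0,1]`,
`ψ(t) ≤ ψ(1) t² = t² log 4`, so `m ψ(t)` is bounded both by `m log 4` and by `h² (1-m) log 4`;
adding `h²` times the first bound to the second gives `(1+h²) m ψ(t) ≤ h² log 4`. Equality holds
at `m = h²/(1+h²)`, `t = 1`, i.e. `u = 2h²/(1+h²)`, `v = 0`. -/

/-- The Ditzian–Totik weight φ(x) = √(x(1-x)). -/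
noncomputable def phiDT (x : ℝ) : ℝ := Real.sqrt (x * (1 - x))

/-- Second-order Ditzian–Totik modulus of smoothness on [0,1]. -/
noncomputable def omega2DT (f : ℝ → ℝ) (h : ℝ) : ℝ :=
  sSup {d : ℝ | ∃ u v : ℝ, u ∈ Set.Icc (0 : ℝ) 1 ∧ v ∈ Set.Icc (0 : ℝ) 1 ∧
    |u - v| ≤ 2 * h * phiDT ((u + v) / 2) ∧
    d = |f u - 2 * f ((u + v) / 2) + f v|}

open Real Set

noncomputable def symmMulLog (t : ℝ) : ℝ := (1 + t) * log (1 + t) + (1 - t) * log (1 - t)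

lemma continuous_symmMulLog : Continuous symmMulLog :=
  (continuous_const.add continuous_id).mul_log.add (continuous_const.sub continuous_id).mul_log

lemma symmMulLog_neg (t : ℝ) : symmMulLog (-t) = symmMulLog t := by
  simp only [symmMulLog, sub_neg_eq_add, ← sub_eq_add_neg]
  ring

lemma symmMulLog_one : symmMulLog 1 = log 4 := by
  rw [show (4 : ℝ) = 2 * 2 by norm_num, log_mul two_ne_zero two_ne_zero]
  norm_num [symmMulLog]
  ring

lemma symmMulLog_nonneg {t : ℝ} (ht : |t| ≤ 1) : 0 ≤ symmMulLog t := by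
  obtain ⟨h₁, h₂⟩ := abs_le.mp ht
  have := self_sub_one_le_mul_log (x := 1 + t) (by linarith)
  have := self_sub_one_le_mul_log (x := 1 - t) (by linarith)
  unfold symmMulLog
  linarith

lemma hasDerivAt_symmMulLog {t : ℝ} (ht : t ∈ Ioo (-1) 1) :
    HasDerivAt symmMulLog (log (1 + t) - log (1 - t)) t := by
  obtain ⟨h₁, h₂⟩ := ht
  have hp := (hasDerivAt_mul_log (by linarith : 1 + t ≠ 0)).comp t ((hasDerivAt_id t).const_add 1)
  have hm := (hasDerivAt_mul_log (by linarith : 1 - t ≠ 0)).comp t ((hasDerivAt_id t).const_sub 1)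
  exact (hp.add hm).congr_deriv (by ring)

lemma log_one_add_sub_log_one_sub_le {t : ℝ} (h₀ : 0 ≤ t) (h₁ : t < 1) :
    log (1 + t) - log (1 - t) ≤ t * ((1 + t)⁻¹ + (1 - t)⁻¹) := by
  have hp : 0 < 1 + t := by linarith
  have hm : 0 < 1 - t := by linarith
  have := log_div_le_sum_range_add h₀ h₁ 0
  rw [log_div hp.ne' hm.ne'] at this
  norm_num at this
  have : t / (1 - t ^ 2) = t * ((1 + t)⁻¹ + (1 - t)⁻¹) / 2 := by
    rw [show 1 - t ^ 2 = (1 + t) * (1 - t) by ring]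
    field_simp
    ring
  linarith

-- `t ψ'(t) - 2ψ(t)` vanishes at `0` and has derivative `t ψ''(t) - ψ'(t) ≥ 0`.
lemma two_mul_symmMulLog_le {t : ℝ} (h₀ : 0 ≤ t) (h₁ : t < 1) :
    2 * symmMulLog t ≤ t * (log (1 + t) - log (1 - t)) := by
  let q t := t * (log (1 + t) - log (1 - t)) - 2 * symmMulLog t
  have hq : ∀ s ∈ Ioo (-1) 1,
      HasDerivAt q (s * ((1 + s)⁻¹ + (1 - s)⁻¹) - (log (1 + s) - log (1 - s))) s := by
    rintro s ⟨hs₁, hs₂⟩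
    have hL := (((hasDerivAt_id s).const_add 1).log (by simp only [id]; linarith)).sub
      (((hasDerivAt_id s).const_sub 1).log (by simp only [id]; linarith))
    exact (((hasDerivAt_id s).mul hL).sub
      ((hasDerivAt_symmMulLog ⟨hs₁, hs₂⟩).const_mul 2)).congr_deriv
      (by simp only [id, Pi.sub_apply]; ring)
  have hmono : MonotoneOn q (Ico 0 1) := by
    refine monotoneOn_of_hasDerivWithinAt_nonneg (convex_Ico 0 1)
      (fun s hs ↦ (hq s ⟨by linarith [hs.1], hs.2⟩).continuousAt.continuousWithinAt)
      (fun s hs ↦ (hq s ?_).hasDerivWithinAt) fun s hs ↦ ?_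
    all_goals rw [interior_Ico] at hs
    · exact ⟨by linarith [hs.1], hs.2⟩
    · exact sub_nonneg.mpr (log_one_add_sub_log_one_sub_le hs.1.le hs.2)
  have hq0 : q 0 = 0 := by simp [q, symmMulLog]
  linarith [hmono ⟨le_rfl, zero_lt_one⟩ ⟨h₀, h₁⟩ h₀]

lemma monotoneOn_symmMulLog_div_sq : MonotoneOn (fun t ↦ symmMulLog t / t ^ 2) (Ioc 0 1) := by
  have hd : ∀ t ∈ Ioo (0 : ℝ) 1, HasDerivAt (fun t ↦ symmMulLog t / t ^ 2)
      (((log (1 + t) - log (1 - t)) * t ^ 2 - symmMulLog t * (2 * t)) / (t ^ 2) ^ 2) t := by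
    intro t ht
    exact ((hasDerivAt_symmMulLog ⟨by linarith [ht.1], ht.2⟩).div (hasDerivAt_pow 2 t)
      (pow_ne_zero 2 ht.1.ne')).congr_deriv (by norm_num)
  refine monotoneOn_of_hasDerivWithinAt_nonneg (convex_Ioc 0 1)
    (continuous_symmMulLog.continuousOn.div (continuous_pow 2).continuousOn
      fun t ht ↦ pow_ne_zero 2 ht.1.ne')
    (fun t ht ↦ (hd t (by simpa using ht)).hasDerivWithinAt) fun t ht ↦ ?_
  rw [interior_Ioc] at ht
  have := two_mul_symmMulLog_le ht.1.le ht.2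
  apply div_nonneg _ (by positivity)
  nlinarith [ht.1]

lemma symmMulLog_le {t : ℝ} (ht : |t| ≤ 1) : symmMulLog t ≤ log 4 * t ^ 2 := by
  wlog h₀ : 0 ≤ t generalizing t
  · simpa [symmMulLog_neg] using this (t := -t) (by simpa using ht) (by linarith)
  obtain rfl | h₀ := h₀.eq_or_lt
  · simp [symmMulLog]
  have := monotoneOn_symmMulLog_div_sq ⟨h₀, (abs_le.mp ht).2⟩ ⟨zero_lt_one, le_rfl⟩ (abs_le.mp ht).2
  simp only at this
  rwa [symmMulLog_one, one_pow, div_one, div_le_iff₀ (by positivity)] at this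

lemma negMulLog_sub_two_mul_add (m t : ℝ) :
    negMulLog (m * (1 + t)) - 2 * negMulLog m + negMulLog (m * (1 - t)) = -(m * symmMulLog t) := by
  rw [negMulLog_mul, negMulLog_mul]
  simp only [negMulLog, symmMulLog]
  ring

lemma exists_eq_mul_one_add_eq_mul_one_sub {u v : ℝ} (hu : 0 ≤ u) (hv : 0 ≤ v) :
    ∃ m t, |t| ≤ 1 ∧ u = m * (1 + t) ∧ v = m * (1 - t) := by
  obtain huv | huv := (add_nonneg hu hv).eq_or_lt
  · exact ⟨0, 0, by simp, by linarith, by linarith⟩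
  refine ⟨(u + v) / 2, (u - v) / (u + v), ?_, ?_, ?_⟩
  · rw [abs_div, abs_of_pos huv, div_le_one huv, abs_le]
    constructor <;> linarith
  all_goals field_simp; ring

lemma mul_sq_le_of_abs_le_phiDT {h m t : ℝ} (hm₀ : 0 ≤ m) (hm₁ : m ≤ 1)
    (hmt : |2 * m * t| ≤ 2 * h * phiDT m) : m * t ^ 2 ≤ h ^ 2 * (1 - m) := by
  obtain rfl | hm₀ := hm₀.eq_or_lt
  · simpa using sq_nonneg h
  have hsq := sq_le_sq' (abs_le.mp hmt).1 (abs_le.mp hmt).2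
  simp only [phiDT, mul_pow, Real.sq_sqrt (by nlinarith : 0 ≤ m * (1 - m))] at hsq
  nlinarith

lemma mul_symmMulLog_le {h m t : ℝ} (hm : 0 ≤ m) (ht : |t| ≤ 1)
    (hmt : m * t ^ 2 ≤ h ^ 2 * (1 - m)) : m * symmMulLog t ≤ h ^ 2 * log 4 / (1 + h ^ 2) := by
  have hlog : 0 ≤ log 4 := log_nonneg (by norm_num)
  have hE : m * symmMulLog t ≤ log 4 * (m * t ^ 2) := by
    nlinarith [mul_le_mul_of_nonneg_left (symmMulLog_le ht) hm]
  have hE₁ : m * symmMulLog t ≤ log 4 * m := hE.trans (mul_le_mul_of_nonneg_left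
    (mul_le_of_le_one_right hm ((sq_le_one_iff_abs_le_one t).mpr ht)) hlog)
  have hE₂ : m * symmMulLog t ≤ log 4 * (h ^ 2 * (1 - m)) :=
    hE.trans (mul_le_mul_of_nonneg_left hmt hlog)
  rw [le_div_iff₀ (by positivity)]
  nlinarith [sq_nonneg h]

lemma abs_negMulLog_sub_two_mul_add_le {h u v : ℝ} (hu : u ∈ Icc 0 1) (hv : v ∈ Icc 0 1)
    (huv : |u - v| ≤ 2 * h * phiDT ((u + v) / 2)) :
    |negMulLog u - 2 * negMulLog ((u + v) / 2) + negMulLog v| ≤ h ^ 2 * log 4 / (1 + h ^ 2) := by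
  obtain ⟨m, t, ht, rfl, rfl⟩ := exists_eq_mul_one_add_eq_mul_one_sub hu.1 hv.1
  have hmid : (m * (1 + t) + m * (1 - t)) / 2 = m := by ring
  have hm₀ : 0 ≤ m := by linarith [hu.1, hv.1]
  have hm₁ : m ≤ 1 := by linarith [hu.2, hv.2]
  rw [hmid] at huv ⊢
  rw [negMulLog_sub_two_mul_add, abs_neg, abs_of_nonneg (mul_nonneg hm₀ (symmMulLog_nonneg ht))]
  refine mul_symmMulLog_le hm₀ ht (mul_sq_le_of_abs_le_phiDT hm₀ hm₁ ?_)
  convert huv using 2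
  ring

lemma phiDT_sq_div_one_add_sq {h : ℝ} (h₀ : 0 ≤ h) :
    phiDT (h ^ 2 / (1 + h ^ 2)) = h / (1 + h ^ 2) := by
  rw [phiDT, ← Real.sqrt_sq (by positivity : 0 ≤ h / (1 + h ^ 2))]
  congr 1
  field_simp
  ring

/-- For f(x) = -x ln x and 0 < h ≤ 1: ω₂^φ(f,h) = h² ln 4/(1+h²). -/
theorem stmt8 (h : ℝ) (h0 : 0 < h) (h1 : h ≤ 1) :
    omega2DT (fun x => -x * Real.log x) h = h ^ 2 * Real.log 4 / (1 + h ^ 2) := by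
  set m := h ^ 2 / (1 + h ^ 2) with hm
  have hmid : (m * (1 + 1) + m * (1 - 1)) / 2 = m := by ring
  have hm₀ : 0 ≤ m := by positivity
  refine IsGreatest.csSup_eq ⟨⟨m * (1 + 1), m * (1 - 1), ⟨by positivity, ?_⟩, by simp, ?_, ?_⟩, ?_⟩
  · rw [hm, div_mul_eq_mul_div, div_le_one (by positivity)]
    nlinarith
  · rw [hmid, phiDT_sq_div_one_add_sq h0.le, show m * (1 + 1) - m * (1 - 1) = 2 * m by ring,
      abs_of_nonneg (by positivity), hm]
    apply le_of_eq
    ring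
  · change _ = |negMulLog _ - 2 * negMulLog _ + negMulLog _|
    rw [hmid, negMulLog_sub_two_mul_add, symmMulLog_one, abs_neg,
      abs_of_nonneg (mul_nonneg hm₀ (log_nonneg (by norm_num))), hm]
    ring
  · rintro d ⟨u, v, hu, hv, huv, rfl⟩
    exact abs_negMulLog_sub_two_mul_add_le hu hv huv
end

section
/- Let (X_1,...,X_S) ∼ Multinomial(n; p_1,...,p_S), a > 0, and H(P̂_B) = -∑_i p̂_{B,i} ln p̂_{B,i} where p̂_{B,i} = (X_i+a)/(n+Sa). Then Var(H(P̂_B)) ≤ (n/(n+Sa)²)·(3 + ln((n+Sa)/(a+1)))². -/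
open Finset

/-- Dirichlet-smoothed plug-in entropy H(P̂_B) with p̂_{B,i} = (X_i+a)/(n+Sa). -/
noncomputable def Hhat (n S : ℕ) (a : ℝ) (x : Fin S → ℕ) : ℝ :=
  -∑ i, (((x i : ℝ) + a) / ((n : ℝ) + S * a)) *
      Real.log (((x i : ℝ) + a) / ((n : ℝ) + S * a))

/-!
Write the multinomial vector as the counts of `n` i.i.d. draws from `p`; the multinomial
coefficients are the sizes of the fibres of this map, read off from the multinomial theorem.
Then `H(P̂_B) = ∑ i, φ (X i)` with `φ k = negMulLog ((k + a) / N)`, `N = n + S a`. Redrawing one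
sample raises one count by one and lowers another by one, and by the elementary bounds
`log (m + 1) ≤ (m + 1) log (m + 1) - m log m ≤ log (m + 1) + 1` every increment of `φ` lies in
`[-1 / N, log (N / (a + 1)) / N]`. So `H` has bounded differences `(1 + log (N / (a + 1))) / N`, and
the Efron–Stein inequality, proved by induction on `n` conditioning on the first draw, bounds the
variance by `n / 2` times the square of that.
-/

open Real

section IidExp

variable {α : Type*} [Fintype α] {p : α → ℝ}

def iidExp {n : ℕ} (p : α → ℝ) (f : (Fin n → α) → ℝ) : ℝ :=
  ∑ z, (∏ j, p (z j)) * f z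

lemma iidExp_succ {n : ℕ} (p : α → ℝ) (f : (Fin (n + 1) → α) → ℝ) :
    iidExp p f = iidExp p fun z => ∑ y, p y * f (Fin.cons y z) := by
  rw [iidExp, ← (Fin.consEquiv fun _ => α).sum_comp, Fintype.sum_prod_type, sum_comm]
  simp only [iidExp, mul_sum]
  refine sum_congr rfl fun z _ => sum_congr rfl fun y _ => ?_
  change (∏ j, p ((Fin.cons y z : Fin (n + 1) → α) j)) * f (Fin.cons y z) = _
  simp only [Fin.prod_univ_succ, Fin.cons_zero, Fin.cons_succ]
  ring

lemma iidExp_const {n : ℕ} (hps : ∑ i, p i = 1) (c : ℝ) :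
    iidExp p (fun _ : Fin n → α => c) = c := by
  rw [iidExp, ← sum_mul, ← Fintype.prod_sum]
  simp [hps]

lemma iidExp_sub {n : ℕ} (f g : (Fin n → α) → ℝ) :
    iidExp p (fun z => f z - g z) = iidExp p f - iidExp p g := by
  simp only [iidExp, mul_sub, sum_sub_distrib]

lemma iidExp_mono {n : ℕ} (hp : ∀ i, 0 ≤ p i) {f g : (Fin n → α) → ℝ} (h : ∀ z, f z ≤ g z) :
    iidExp p f ≤ iidExp p g :=
  sum_le_sum fun z _ => mul_le_mul_of_nonneg_left (h z) (prod_nonneg fun j _ => hp (z j))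

lemma abs_sum_mul_sub_sum_mul_le (hp : ∀ i, 0 ≤ p i) (hps : ∑ i, p i = 1) {u v : α → ℝ} {D : ℝ}
    (h : ∀ y, |u y - v y| ≤ D) : |∑ y, p y * u y - ∑ y, p y * v y| ≤ D := by
  rw [← sum_sub_distrib]
  calc |∑ y, (p y * u y - p y * v y)| ≤ ∑ y, |p y * u y - p y * v y| := abs_sum_le_sum_abs _ _
    _ ≤ ∑ y, p y * D := sum_le_sum fun y _ => by
      rw [← mul_sub, abs_mul, abs_of_nonneg (hp y)]
      exact mul_le_mul_of_nonneg_left (h y) (hp y)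
    _ = D := by rw [← sum_mul, hps, one_mul]

lemma sum_mul_sq_sub_sq_eq (hps : ∑ i, p i = 1) (g : α → ℝ) :
    ∑ y, p y * g y ^ 2 - (∑ y, p y * g y) ^ 2 =
      (∑ y, ∑ y', p y * p y' * (g y - g y') ^ 2) / 2 := by
  have expand : ∑ y, ∑ y', p y * p y' * (g y - g y') ^ 2 =
      ∑ y, ∑ y', (p y * g y ^ 2 * p y' + p y * (p y' * g y' ^ 2) -
        2 * (p y * g y) * (p y' * g y')) :=
    sum_congr rfl fun _ _ => sum_congr rfl fun _ _ => by ring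
  simp only [expand, sum_add_distrib, sum_sub_distrib, ← mul_sum, ← sum_mul, hps]
  ring

lemma sum_mul_sq_sub_sq_le (hp : ∀ i, 0 ≤ p i) (hps : ∑ i, p i = 1) {g : α → ℝ} {D : ℝ}
    (hg : ∀ y y', |g y - g y'| ≤ D) :
    ∑ y, p y * g y ^ 2 - (∑ y, p y * g y) ^ 2 ≤ D ^ 2 / 2 := by
  rw [sum_mul_sq_sub_sq_eq hps]
  gcongr
  calc ∑ y, ∑ y', p y * p y' * (g y - g y') ^ 2 ≤ ∑ y, ∑ y', p y * p y' * D ^ 2 :=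
        sum_le_sum fun y _ => sum_le_sum fun y' _ =>
          mul_le_mul_of_nonneg_left
            ((sq_abs _).symm.le.trans (pow_le_pow_left₀ (abs_nonneg _) (hg y y') 2))
            (mul_nonneg (hp y) (hp y'))
    _ = D ^ 2 := by simp only [← sum_mul, ← mul_sum, hps, one_mul]

theorem iidExp_sq_sub_sq_le (hp : ∀ i, 0 ≤ p i) (hps : ∑ i, p i = 1) {D : ℝ} :
    ∀ {n : ℕ} (f : (Fin n → α) → ℝ),
      (∀ z j y y', |f (Function.update z j y) - f (Function.update z j y')| ≤ D) →
      iidExp p (fun z => f z ^ 2) - iidExp p f ^ 2 ≤ n / 2 * D ^ 2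
  | 0, f, _ => by simp [iidExp]
  | n + 1, f, hf => by
    -- law of total variance, conditioning on the first draw
    set m : (Fin n → α) → ℝ := fun z => ∑ y, p y * f (Fin.cons y z)
    have hfibre (z : Fin n → α) : ∑ y, p y * f (Fin.cons y z) ^ 2 - m z ^ 2 ≤ D ^ 2 / 2 :=
      sum_mul_sq_sub_sq_le hp hps fun y y' => by
        simpa only [Fin.update_cons_zero] using hf (Fin.cons y' z) 0 y y'
    have hm (z : Fin n → α) (j : Fin n) (y₁ y₂ : α) :
        |m (Function.update z j y₁) - m (Function.update z j y₂)| ≤ D :=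
      abs_sum_mul_sub_sum_mul_le hp hps fun y => by
        simpa only [Fin.cons_update] using hf (Fin.cons y z) j.succ y₁ y₂
    calc iidExp p (fun z => f z ^ 2) - iidExp p f ^ 2
        = iidExp p (fun z => ∑ y, p y * f (Fin.cons y z) ^ 2 - m z ^ 2) +
            (iidExp p (fun z => m z ^ 2) - iidExp p m ^ 2) := by
          rw [iidExp_succ p (fun z => f z ^ 2), iidExp_succ p f, iidExp_sub]
          ring
      _ ≤ D ^ 2 / 2 + n / 2 * D ^ 2 :=
          add_le_add ((iidExp_mono hp hfibre).trans_eq (iidExp_const hps _))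
            (iidExp_sq_sub_sq_le hp hps m hm)
      _ = (n + 1 : ℕ) / 2 * D ^ 2 := by push_cast; ring

end IidExp

section Counts

variable {α : Type*} [DecidableEq α] {n : ℕ}

def counts (z : Fin n → α) (i : α) : ℕ := #{j | z j = i}

lemma counts_le (z : Fin n → α) (i : α) : counts z i ≤ n :=
  (card_filter_le _ _).trans (by simp)

lemma prod_comp_eq_prod_pow_counts [Fintype α] {M : Type*} [CommMonoid M] (f : α → M)
    (z : Fin n → α) :
    ∏ j, f (z j) = ∏ i, f i ^ counts z i := by
  rw [← prod_fiberwise univ z (fun j => f (z j))]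
  refine prod_congr rfl fun i _ => ?_
  rw [prod_congr rfl fun j hj => by rw [(mem_filter.1 hj).2], prod_const]
  rfl

open MvPolynomial in
lemma card_counts_eq [Fintype α] (x : α → ℕ) :
    #{z : Fin n → α | counts z = x} = if ∑ i, x i = n then Nat.multinomial univ x else 0 := by
  have hcoeff (k : α → ℕ) :
      coeff (Finsupp.equivFunOnFinite.symm x) (∏ i, (X i : MvPolynomial α ℕ) ^ k i) =
        if k = x then 1 else 0 := by
    rw [coeff_prod_X_pow]
    congr 1
    simp [Finsupp.ext_iff, funext_iff, eq_comm]
  -- expand `(∑ i, X i) ^ n` as a sum over words and by the multinomial theorem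
  have hsum := sum_pow' univ (X : α → MvPolynomial α ℕ) n
  rw [sum_pow_eq_sum_piAntidiag, Fintype.piFinset_univ] at hsum
  have := congrArg (coeff (Finsupp.equivFunOnFinite.symm x)) hsum
  simp only [prod_comp_eq_prod_pow_counts X, coeff_sum, ← C_eq_coe_nat, coeff_C_mul,
    hcoeff] at this
  simpa [sum_boole, eq_comm] using this.symm

lemma exists_counts_update (z : Fin n → α) (j : Fin n) :
    ∃ d : α → ℕ, ∀ w, counts (Function.update z j w) = d + Pi.single w 1 := by
  refine ⟨fun i => ∑ k ∈ univ \ {j}, if z k = i then 1 else 0, fun w => funext fun i => ?_⟩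
  have hcomp : (fun k => if Function.update z j w k = i then 1 else 0) =
      Function.update (fun k => if z k = i then 1 else 0) j (if w = i then 1 else 0) := by
    funext k; rcases eq_or_ne k j with rfl | hk <;> simp [*]
  rw [counts, card_filter, hcomp, sum_update_of_mem (mem_univ j), Pi.add_apply, Pi.single_apply,
    add_comm]
  simp only [eq_comm]

lemma sum_comp_add_single [Fintype α] {M : Type*} [AddCommGroup M] (φ : ℕ → M) (d : α → ℕ)
    (y : α) :
    ∑ i, φ ((d + Pi.single y 1 : α → ℕ) i) = ∑ i, φ (d i) + (φ (d y + 1) - φ (d y)) := by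
  rw [← add_sum_erase _ _ (mem_univ y), ← add_sum_erase _ (fun i => φ (d i)) (mem_univ y),
    sum_congr rfl fun i hi => by
      rw [Pi.add_apply, Pi.single_eq_of_ne (ne_of_mem_erase hi), add_zero]]
  simp only [Pi.add_apply, Pi.single_eq_same]
  abel

lemma abs_sum_comp_counts_update_sub_le [Fintype α] (φ : ℕ → ℝ) {lo hi : ℝ}
    (hφ : ∀ k < n, φ (k + 1) - φ k ∈ Set.Icc lo hi) (z : Fin n → α) (j : Fin n) (y y' : α) :
    |∑ i, φ (counts (Function.update z j y) i) - ∑ i, φ (counts (Function.update z j y') i)|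
      ≤ hi - lo := by
  obtain ⟨d, hd⟩ := exists_counts_update z j
  have hlt (w : α) : d w < n := by
    simpa [hd] using counts_le (Function.update z j w) w
  obtain ⟨h₁, h₂⟩ := hφ _ (hlt y)
  obtain ⟨h₃, h₄⟩ := hφ _ (hlt y')
  rw [hd, hd, sum_comp_add_single, sum_comp_add_single, abs_le]
  constructor <;> linarith

end Counts

lemma mExp_eq_iidExp (n S : ℕ) (p : Fin S → ℝ) (g : (Fin S → ℕ) → ℝ) :
    mExp n S p g = iidExp p fun z : Fin n → Fin S => g (counts z) := by
  let c : (Fin n → Fin S) → Fin S → Fin (n + 1) :=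
    fun z i => ⟨counts z i, Nat.lt_succ_of_le (counts_le z i)⟩
  have hc (z : Fin n → Fin S) (x : Fin S → Fin (n + 1)) :
      c z = x ↔ counts z = fun i => (x i : ℕ) := by
    simp [c, funext_iff, Fin.ext_iff]
  rw [mExp, iidExp, ← sum_fiberwise univ c]
  refine sum_congr rfl fun x _ => ?_
  have hfibre : ∀ z ∈ (univ : Finset (Fin n → Fin S)).filter
      fun z => counts z = fun i => (x i : ℕ),
      (∏ j, p (z j)) * g (counts z) = (∏ i, p i ^ (x i : ℕ)) * g (fun i => (x i : ℕ)) :=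
      fun z hz => by
    rw [prod_comp_eq_prod_pow_counts p, (mem_filter.1 hz).2]
  rw [filter_congr fun z _ => hc z x, sum_congr rfl hfibre, sum_const, card_counts_eq,
    nsmul_eq_mul]
  split_ifs with h
  · have hspec : (∏ i, ((x i : ℕ).factorial : ℝ)) * Nat.multinomial univ (fun i => (x i : ℕ)) =
        n.factorial := by
      exact_mod_cast h ▸ Nat.multinomial_spec univ (fun i => (x i : ℕ))
    rw [eq_div_of_mul_eq (by positivity) ((mul_comm _ _).trans hspec)]
    ring
  · simp

lemma negMulLog_div (x N : ℝ) : negMulLog (x / N) = (negMulLog x + x * log N) / N := by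
  rw [div_eq_mul_inv, negMulLog_mul]
  simp only [negMulLog, log_inv]
  ring

lemma log_add_one_le_negMulLog_sub {m : ℝ} (hm : 0 ≤ m) :
    log (m + 1) ≤ negMulLog m - negMulLog (m + 1) := by
  have hmono : m * log m ≤ m * log (m + 1) := by
    rcases hm.eq_or_lt with rfl | hm
    · simp
    · exact mul_le_mul_of_nonneg_left (log_le_log hm (by linarith)) hm.le
  simp only [negMulLog]
  linarith

lemma negMulLog_sub_le_log_add_one_add_one {m : ℝ} (hm : 0 ≤ m) :
    negMulLog m - negMulLog (m + 1) ≤ log (m + 1) + 1 := by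
  have hgap : m * (log (m + 1) - log m) ≤ 1 := by
    rcases hm.eq_or_lt with rfl | hm
    · simp
    · have h := log_le_sub_one_of_pos (x := (m + 1) / m) (by positivity)
      rw [log_div (by positivity) hm.ne'] at h
      calc m * (log (m + 1) - log m) ≤ m * ((m + 1) / m - 1) :=
            mul_le_mul_of_nonneg_left h hm.le
        _ = 1 := by field_simp; ring
  simp only [negMulLog]
  linarith

lemma negMulLog_add_one_div_sub_le {m N : ℝ} (hm : 0 ≤ m) (hN : 0 ≤ N) :
    negMulLog ((m + 1) / N) - negMulLog (m / N) ≤ (log N - log (m + 1)) / N := by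
  rw [negMulLog_div, negMulLog_div, ← sub_div]
  gcongr ?_ / _
  linarith [log_add_one_le_negMulLog_sub hm]

lemma le_negMulLog_add_one_div_sub {m N : ℝ} (hm : 0 ≤ m) (hN : 0 ≤ N) :
    (log N - log (m + 1) - 1) / N ≤ negMulLog ((m + 1) / N) - negMulLog (m / N) := by
  rw [negMulLog_div, negMulLog_div, ← sub_div]
  gcongr ?_ / _
  linarith [negMulLog_sub_le_log_add_one_add_one hm]

lemma negMulLog_increment_mem_Icc {k a N : ℝ} (hk : 0 ≤ k) (ha : 0 ≤ a) (hkN : k + a + 1 ≤ N) :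
    negMulLog ((k + a + 1) / N) - negMulLog ((k + a) / N) ∈
      Set.Icc (-1 / N) (log (N / (a + 1)) / N) := by
  have hm : 0 ≤ k + a := by positivity
  have hN : 0 < N := by linarith
  constructor
  · refine le_trans ?_ (le_negMulLog_add_one_div_sub hm hN.le)
    gcongr ?_ / _
    linarith [log_le_log (by positivity) hkN]
  · refine (negMulLog_add_one_div_sub_le hm hN.le).trans ?_
    rw [log_div hN.ne' (by positivity)]
    gcongr ?_ / _
    linarith [log_le_log (by positivity : 0 < a + 1) (by linarith : a + 1 ≤ k + a + 1)]

lemma Hhat_eq_sum_negMulLog (n S : ℕ) (a : ℝ) (x : Fin S → ℕ) :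
    Hhat n S a x = ∑ i, negMulLog ((x i + a) / (n + S * a)) := by
  simp only [Hhat, negMulLog, neg_mul, sum_neg_distrib]

lemma abs_Hhat_counts_update_sub_le {n S : ℕ} {a : ℝ} (ha : 0 ≤ a) (z : Fin n → Fin S)
    (j : Fin n) (y y' : Fin S) :
    |Hhat n S a (counts (Function.update z j y)) - Hhat n S a (counts (Function.update z j y'))|
      ≤ (1 + log ((n + S * a) / (a + 1))) / (n + S * a) := by
  have hS : (1 : ℝ) ≤ S := by exact_mod_cast y.pos
  simp only [Hhat_eq_sum_negMulLog]
  refine (abs_sum_comp_counts_update_sub_le (fun k : ℕ => negMulLog ((k + a) / (n + S * a)))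
    (lo := -1 / (n + S * a)) (hi := log ((n + S * a) / (a + 1)) / (n + S * a))
    (fun k hk => ?_) z j y y').trans_eq (by ring)
  have hk : (k : ℝ) + 1 ≤ n := by exact_mod_cast hk
  push_cast
  rw [add_right_comm]
  refine negMulLog_increment_mem_Icc k.cast_nonneg ha ?_
  nlinarith

/-- Var(H(P̂_B)) ≤ (n/(n+Sa)²)·(3 + ln((n+Sa)/(a+1)))². -/
theorem stmt11 (n S : ℕ) (hn : 1 ≤ n) (hS : 2 ≤ S) (a : ℝ) (ha : 0 < a)
    (p : Fin S → ℝ) (hp : ∀ i, 0 ≤ p i) (hps : ∑ i, p i = 1) :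
    mExp n S p (fun x => (Hhat n S a x) ^ 2) - (mExp n S p (Hhat n S a)) ^ 2
      ≤ ((n : ℝ) / ((n : ℝ) + S * a) ^ 2) *
        (3 + Real.log (((n : ℝ) + S * a) / (a + 1))) ^ 2 := by
  have hn : (1 : ℝ) ≤ n := by exact_mod_cast hn
  have hS : (2 : ℝ) ≤ S := by exact_mod_cast hS
  set N : ℝ := n + S * a
  set L := log (N / (a + 1))
  have hL : 0 ≤ L := log_nonneg ((one_le_div (by positivity)).2 (by nlinarith))
  rw [mExp_eq_iidExp, mExp_eq_iidExp]
  calc _ ≤ n / 2 * ((1 + L) / N) ^ 2 :=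
        iidExp_sq_sub_sq_le hp hps _ (abs_Hhat_counts_update_sub_le ha.le)
    _ = n / N ^ 2 * ((1 + L) ^ 2 / 2) := by rw [div_pow]; ring
    _ ≤ n / N ^ 2 * (3 + L) ^ 2 := by gcongr; nlinarith
end

section
/- If n < Sa (with a > 0, S ≥ 2), then sup over distributions P on S elements of E_P[(H(P̂_B) - H(P))²] ≥ (ln S)²/16. -/
open Finset

/-! At a point mass `P = δ_i` the counts are almost surely `n • e_i` and `H(P) = 0`, so the risk is
`H(P̂_B)²`. The `S - 1` empty cells each get mass `a / (n + S a)`, whence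
`H(P̂_B) ≥ (S - 1) a / (n + S a) · log ((n + S a) / a) ≥ log S / 4` once `n < S a`.
The supremum is over a bounded set because the risk is continuous on the compact simplex. -/

open Real

lemma continuous_mExp {n S : ℕ} {g : (Fin S → ℝ) → (Fin S → ℕ) → ℝ}
    (hg : ∀ x, Continuous fun p => g p x) :
    Continuous fun p => mExp n S p (g p) := by
  unfold mExp
  exact continuous_finsetSum _ fun x _ =>
    continuous_if_const _ (fun _ => by fun_prop) fun _ => continuous_const

lemma bddAbove_mExp_simplex {n S : ℕ} {g : (Fin S → ℝ) → (Fin S → ℕ) → ℝ}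
    (hg : ∀ x, Continuous fun p => g p x) :
    BddAbove {r : ℝ | ∃ p : Fin S → ℝ, (∀ i, 0 ≤ p i) ∧ (∑ i, p i = 1) ∧
      r = mExp n S p (g p)} := by
  refine ((isCompact_stdSimplex ℝ (Fin S)).bddAbove_image
    (continuous_mExp (n := n) hg).continuousOn).mono ?_
  rintro r ⟨p, hp, hp1, rfl⟩
  exact ⟨p, ⟨hp, hp1⟩, rfl⟩

lemma mExp_single {n S : ℕ} (i : Fin S) (g : (Fin S → ℕ) → ℝ) :
    mExp n S (Pi.single i 1) g = g (Pi.single i n) := by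
  set x₀ : Fin S → Fin (n + 1) := Pi.single i (Fin.last n)
  have hx₀ : (fun j => (x₀ j : ℕ)) = Pi.single i n := by
    funext j
    rcases eq_or_ne j i with rfl | h <;> simp [x₀, *]
  unfold mExp
  rw [sum_eq_single x₀ ?_ (by simp), hx₀]
  · simp [congrFun hx₀, Pi.single_apply, apply_ite, prod_ite_eq', n.factorial_ne_zero]
  intro x _ hx
  refine ite_eq_right_iff.mpr fun hsum => ?_
  obtain ⟨j, hji, hj⟩ : ∃ j ≠ i, (x j : ℕ) ≠ 0 := by
    by_contra! h
    refine hx (funext fun j => Fin.ext ?_)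
    have : (x i : ℕ) = n := by rwa [sum_eq_single i fun j _ => h j] at hsum; simp
    rcases eq_or_ne j i with rfl | hj <;> simp [x₀, *]
  have hp : ∏ k, (Pi.single i 1 : Fin S → ℝ) k ^ (x k : ℕ) = 0 :=
    prod_eq_zero (mem_univ j) (by simp [hji, hj])
  rw [hp, mul_zero, zero_mul]

lemma mul_negMulLog_le_Hhat_single {n S : ℕ} {a : ℝ} (ha : 0 ≤ a) (i : Fin S) :
    (S - 1) * negMulLog (a / (n + S * a)) ≤ Hhat n S a (Pi.single i n) := by
  set x : Fin S → ℕ := Pi.single i n with hx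
  have hS : (1 : ℝ) ≤ S := by exact_mod_cast i.pos
  have hq : ∀ j, 0 ≤ (x j + a) / (n + S * a) ∧ (x j + a) / (n + S * a) ≤ 1 := by
    intro j
    have hj : (x j : ℝ) ≤ n := by
      rcases eq_or_ne j i with rfl | h <;> simp [x, *]
    refine ⟨by positivity, div_le_one_of_le₀ ?_ (by positivity)⟩
    nlinarith
  rw [Hhat_eq_sum_negMulLog]
  calc (S - 1 : ℝ) * negMulLog (a / (n + S * a))
      = ∑ j ∈ univ.erase i, negMulLog ((x j + a) / (n + S * a)) := by
        rw [sum_congr rfl fun j hj => by rw [hx, Pi.single_eq_of_ne (ne_of_mem_erase hj)]]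
        simp [card_erase_of_mem, Nat.cast_sub i.pos]
    _ ≤ _ := sum_le_sum_of_subset_of_nonneg (erase_subset i univ)
        fun j _ _ => negMulLog_nonneg (hq j).1 (hq j).2

lemma log_div_four_le_mul_negMulLog {s m a : ℝ} (hs : 2 ≤ s) (hm : 0 ≤ m) (ha : 0 < a)
    (hma : m < s * a) : log s / 4 ≤ (s - 1) * negMulLog (a / (m + s * a)) := by
  have hT : 0 < m + s * a := by positivity
  have hcoef : 1 / 4 ≤ (s - 1) * (a / (m + s * a)) := by
    rw [mul_div_assoc', le_div_iff₀ hT]; nlinarith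
  have hlog : log s ≤ log ((m + s * a) / a) :=
    log_le_log (by linarith) (by rw [le_div_iff₀ ha]; linarith)
  calc log s / 4 = 1 / 4 * log s := by ring
    _ ≤ (s - 1) * (a / (m + s * a)) * log ((m + s * a) / a) :=
        mul_le_mul hcoef hlog (log_nonneg (by linarith)) (by linarith)
    _ = (s - 1) * negMulLog (a / (m + s * a)) := by
        rw [negMulLog, log_div ha.ne' hT.ne', log_div hT.ne' ha.ne']; ring

theorem stmt14_general (n S : ℕ) (hS : 2 ≤ S) (a : ℝ) (ha : 0 < a)
    (hna : (n : ℝ) < S * a) :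
    sSup {r : ℝ | ∃ p : Fin S → ℝ, (∀ i, 0 ≤ p i) ∧ (∑ i, p i = 1) ∧
        r = mExp n S p (fun x =>
          (Hhat n S a x - (-∑ i, p i * Real.log (p i))) ^ 2)}
      ≥ (Real.log S) ^ 2 / 16 := by
  let i : Fin S := ⟨0, by omega⟩
  have hentropy : -∑ j, (Pi.single i 1 : Fin S → ℝ) j * log ((Pi.single i 1 : Fin S → ℝ) j) = 0 := by
    simp [Pi.single_apply, apply_ite]
  have hHhat : log S / 4 ≤ Hhat n S a (Pi.single i n) :=
    (log_div_four_le_mul_negMulLog (by exact_mod_cast hS) n.cast_nonneg ha hna).trans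
      (mul_negMulLog_le_Hhat_single ha.le i)
  refine le_csSup_of_le (bddAbove_mExp_simplex fun x => by fun_prop)
    ⟨Pi.single i 1, fun j => ?_, by simp, rfl⟩ ?_
  · rcases eq_or_ne j i with rfl | h <;> simp [*]
  · rw [mExp_single, hentropy, sub_zero]
    have h0 : 0 ≤ log S / 4 := div_nonneg (log_nonneg (by norm_cast; omega)) (by norm_num)
    calc log S ^ 2 / 16 = (log S / 4) ^ 2 := by ring
      _ ≤ _ := pow_le_pow_left₀ h0 hHhat 2

/-- If n < Sa then sup_P E_P[(H(P̂_B) - H(P))²] ≥ (ln S)²/16. -/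
theorem stmt14 (n S : ℕ) (hn : 1 ≤ n) (hS : 2 ≤ S) (a : ℝ) (ha : 0 < a)
    (hna : (n : ℝ) < S * a) :
    sSup {r : ℝ | ∃ p : Fin S → ℝ, (∀ i, 0 ≤ p i) ∧ (∑ i, p i = 1) ∧
        r = mExp n S p (fun x =>
          (Hhat n S a x - (-∑ i, p i * Real.log (p i))) ^ 2)}
      ≥ (Real.log S) ^ 2 / 16 :=
  stmt14_general n S hS a ha hna
end

section
/- Let (X_1,...,X_S) ∼ Multinomial(n; p_1,...,p_S), a > 0, and r(p) = f((np+a)/(n+Sa)) with f(x) = -x ln x. Then ∑_{i=1}^S E[P_n(i)·(r(P_n(i) - 1/n) - r(P_n(i)))²] ≤ (1/(n+Sa)²)·∑_{i=1}^S p_i·(3 - ln((np_i+a)/(n+Sa)))², where P_n(i) = X_i/n. -/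
open Finset

/-- r(p) = f((np+a)/(n+Sa)) with f(x) = -x ln x. -/
noncomputable def rfun (n S : ℕ) (a q : ℝ) : ℝ :=
  -(((n : ℝ) * q + a) / ((n : ℝ) + S * a)) *
    Real.log (((n : ℝ) * q + a) / ((n : ℝ) + S * a))

/-!
Put c = n + S a. Then r(j/n - 1/n) - r(j/n) = f(x - 1/c) - f(x) with x = (j + a)/c and
f = negMulLog, and the elementary bound |f(x - t) - f(x)| ≤ t (3 - log x) makes the i-th summand
at most c⁻² E[φ(Pₙ(i))], where φ(x) = x (3 - log ((n x + a)/c))². The function φ is concave on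
[0, 1], so Jensen's inequality for the law Binomial(n, pᵢ)/n, whose mean is pᵢ, bounds this
by c⁻² φ(pᵢ).
-/

open Real

lemma bernsteinPolynomial.eval_eq (n j : ℕ) (q : ℝ) :
    (bernsteinPolynomial ℝ n j).eval q = n.choose j * q ^ j * (1 - q) ^ (n - j) := by
  simp [bernsteinPolynomial]

lemma binomial_weight_nonneg {q : ℝ} (hq₀ : 0 ≤ q) (hq₁ : q ≤ 1) {n j : ℕ} :
    0 ≤ (n.choose j : ℝ) * q ^ j * (1 - q) ^ (n - j) := by
  have : 0 ≤ 1 - q := by linarith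
  positivity

lemma sum_binomial_weights (n : ℕ) (q : ℝ) :
    ∑ j ∈ range (n + 1), (n.choose j : ℝ) * q ^ j * (1 - q) ^ (n - j) = 1 := by
  simpa [Polynomial.eval_finsetSum, bernsteinPolynomial.eval_eq] using
    congrArg (Polynomial.eval q) (bernsteinPolynomial.sum ℝ n)

lemma sum_binomial_weights_mul (n : ℕ) (q : ℝ) :
    ∑ j ∈ range (n + 1), (n.choose j : ℝ) * q ^ j * (1 - q) ^ (n - j) * j = n * q := by
  have := congrArg (Polynomial.eval q) (bernsteinPolynomial.sum_smul ℝ n)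
  simp only [Polynomial.eval_finsetSum, nsmul_eq_mul, Polynomial.eval_mul, Polynomial.eval_natCast,
    bernsteinPolynomial.eval_eq, Polynomial.eval_X] at this
  rw [← this]
  exact sum_congr rfl fun j _ => by ring

theorem ConcaveOn.sum_binomial_mul_le {φ : ℝ → ℝ} (hφ : ConcaveOn ℝ (Set.Icc 0 1) φ) {n : ℕ}
    (hn : n ≠ 0) {q : ℝ} (hq₀ : 0 ≤ q) (hq₁ : q ≤ 1) :
    ∑ j ∈ range (n + 1), (n.choose j : ℝ) * q ^ j * (1 - q) ^ (n - j) * φ (j / n) ≤ φ q := by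
  have hmem : ∀ j ∈ range (n + 1), (j : ℝ) / n ∈ Set.Icc (0 : ℝ) 1 := fun j hj =>
    ⟨by positivity, div_le_one_of_le₀ (by exact_mod_cast mem_range_succ_iff.1 hj) (by positivity)⟩
  have hmean :
      ∑ j ∈ range (n + 1), (n.choose j : ℝ) * q ^ j * (1 - q) ^ (n - j) * (j / n) = q := by
    simp_rw [← mul_div_assoc, ← sum_div, sum_binomial_weights_mul]
    field_simp
  simpa only [smul_eq_mul, hmean] using
    hφ.le_map_sum (fun j _ => binomial_weight_nonneg hq₀ hq₁) (sum_binomial_weights n q) hmem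

lemma concaveOn_mul_sq_three_sub_log {a b c : ℝ} (hb : 0 ≤ b) (ha : 0 < a) (hc : b + a ≤ c) :
    ConcaveOn ℝ (Set.Icc 0 1) fun x => x * (3 - log ((b * x + a) / c)) ^ 2 := by
  set t : ℝ → ℝ := fun x => 3 - log ((b * x + a) / c)
  have hc₀ : 0 < c := by linarith
  have hu : ∀ x ∈ interior (Set.Icc (0 : ℝ) 1), 0 < b * x + a := fun x hx => by
    rw [interior_Icc] at hx
    nlinarith [hx.1]
  have ht : ∀ x, 0 < b * x + a → HasDerivAt t (-(b / (b * x + a))) x := fun x hx =>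
    (((((hasDerivAt_id x).const_mul b).add_const a).div_const c).log
      (div_pos hx hc₀).ne' |>.const_sub 3).congr_deriv (by simp only [id]; field_simp)
  have hq : ∀ x, 0 < b * x + a →
      HasDerivAt (fun x => b / (b * x + a)) (-(b / (b * x + a)) ^ 2) x := fun x hx =>
    ((hasDerivAt_const x b).div (((hasDerivAt_id x).const_mul b).add_const a) hx.ne').congr_deriv
      (by simp only [id]; field_simp; ring)
  refine concaveOn_of_hasDerivWithinAt2_nonpos (convex_Icc 0 1)
    (f' := fun x => t x ^ 2 - 2 * x * t x * (b / (b * x + a)))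
    (f'' := fun x => 2 * b / (b * x + a) ^ 2 * (x * b * (1 + t x) - 2 * t x * (b * x + a)))
    ?_ (fun x hx => ?_) (fun x hx => ?_) (fun x hx => ?_)
  · refine continuousOn_id.mul ((continuousOn_const.sub (ContinuousOn.log ?_ ?_)).pow 2)
    · fun_prop
    · intro x hx
      have : 0 < b * x + a := by nlinarith [hx.1]
      positivity
  · exact (((hasDerivAt_id x).mul ((ht x (hu x hx)).pow 2)).congr_deriv
      (by simp only [id, Pi.pow_apply]; ring)).hasDerivWithinAt
  · have hux := (hu x hx).ne'
    exact ((((ht x (hu x hx)).pow 2).sub ((((hasDerivAt_id x).const_mul 2).mul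
      (ht x (hu x hx))).mul (hq x (hu x hx)))).congr_deriv
      (by simp only [id, Pi.mul_apply]; field_simp; ring)).hasDerivWithinAt
  · have hux := hu x hx
    rw [interior_Icc] at hx
    have ht₁ : 1 ≤ t x := by
      have : log ((b * x + a) / c) ≤ 0 :=
        log_nonpos (by positivity) ((div_le_one hc₀).2 (by nlinarith [hx.2]))
      simp only [t]; linarith
    have hbx : 0 ≤ b * x := mul_nonneg hb hx.1.le
    apply mul_nonpos_of_nonneg_of_nonpos (by positivity)
    -- `0 ≤ x b ≤ b x + a` and `1 + t x ≤ 2 t x`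
    nlinarith

lemma abs_negMulLog_sub_negMulLog_le {x y : ℝ} (hy : 0 < y) (hyx : y ≤ x) (hx : x ≤ 1) :
    |negMulLog y - negMulLog x| ≤ (x - y) * (3 - log x) := by
  have hx₀ : 0 < x := hy.trans_le hyx
  have hlogx : log x ≤ 0 := log_nonpos hx₀.le hx
  have hlog_mono : log y ≤ log x := log_le_log hy hyx
  have hlog_sub : y * (log x - log y) ≤ x - y := by
    have := log_le_sub_one_of_pos (div_pos hx₀ hy)
    rw [log_div hx₀.ne' hy.ne', div_sub_one hy.ne', le_div_iff₀ hy] at this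
    linarith
  simp only [negMulLog, abs_le]
  constructor
  · nlinarith [mul_nonneg hy.le (sub_nonneg.2 hlog_mono)]
  · nlinarith [mul_nonneg (sub_nonneg.2 hyx) (neg_nonneg.2 hlogx)]

lemma sq_negMulLog_sub_negMulLog_le {u c : ℝ} (hu : 1 < u) (huc : u ≤ c) :
    (negMulLog ((u - 1) / c) - negMulLog (u / c)) ^ 2 ≤ 1 / c ^ 2 * (3 - log (u / c)) ^ 2 := by
  have hc : 0 < c := by linarith
  have h := abs_negMulLog_sub_negMulLog_le (div_pos (sub_pos.2 hu) hc)
    (div_le_div_of_nonneg_right (by linarith) hc.le) ((div_le_one hc).2 huc)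
  rw [← sub_div, sub_sub_cancel, abs_le] at h
  calc _ ≤ (1 / c * (3 - log (u / c))) ^ 2 := sq_le_sq' h.1 h.2
    _ = _ := by ring

lemma rfun_eq_negMulLog (n S : ℕ) (a q : ℝ) :
    rfun n S a q = negMulLog ((n * q + a) / (n + S * a)) := rfl

lemma mul_sq_rfun_sub_le {n S j : ℕ} {a : ℝ} (hS : 1 ≤ S) (ha : 0 < a) (hj : j ≤ n) :
    (j / n : ℝ) * (rfun n S a (j / n - 1 / n) - rfun n S a (j / n)) ^ 2 ≤
      1 / ((n : ℝ) + S * a) ^ 2 *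
        ((j / n : ℝ) * (3 - log ((n * (j / n : ℝ) + a) / ((n : ℝ) + S * a))) ^ 2) := by
  rcases Nat.eq_zero_or_pos j with rfl | hj₁
  · simp
  have hn : (n : ℝ) ≠ 0 := Nat.cast_ne_zero.2 (by omega)
  have hju : (n : ℝ) * (j / n) + a = j + a := by field_simp
  have hju' : (n : ℝ) * (j / n - 1 / n) + a = j + a - 1 := by field_simp; ring
  have hjc : (j : ℝ) + a ≤ n + S * a := by
    have : (j : ℝ) ≤ n := by exact_mod_cast hj
    have : (1 : ℝ) ≤ S := by exact_mod_cast hS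
    nlinarith
  have h := sq_negMulLog_sub_negMulLog_le (u := j + a) (by
    have : (1 : ℝ) ≤ j := by exact_mod_cast hj₁
    linarith) hjc
  rw [rfun_eq_negMulLog, rfun_eq_negMulLog, hju, hju']
  calc _ ≤ (j / n : ℝ) * (1 / ((n : ℝ) + S * a) ^ 2 * (3 - log ((j + a) / (n + S * a))) ^ 2) := by
        gcongr
    _ = _ := by ring

theorem stmt19_general (n S : ℕ) (hn : 1 ≤ n) (a : ℝ) (ha : 0 < a)
    (p : Fin S → ℝ) (hp : ∀ i, 0 ≤ p i) (hps : ∑ i, p i = 1) :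
    ∑ i, ∑ j ∈ Finset.range (n + 1),
        (n.choose j : ℝ) * p i ^ j * (1 - p i) ^ (n - j) *
          (((j : ℝ) / n) *
            (rfun n S a ((j : ℝ) / n - 1 / n) - rfun n S a ((j : ℝ) / n)) ^ 2)
      ≤ (1 / ((n : ℝ) + S * a) ^ 2) *
        ∑ i, p i * (3 - Real.log (((n : ℝ) * p i + a) / ((n : ℝ) + S * a))) ^ 2 := by
  rw [mul_sum]
  refine sum_le_sum fun i _ => ?_
  have hS : 1 ≤ S := i.pos
  have hpi : p i ≤ 1 := hps ▸ single_le_sum (fun j _ => hp j) (mem_univ i)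
  set c : ℝ := n + S * a
  set φ : ℝ → ℝ := fun x => x * (3 - log ((n * x + a) / c)) ^ 2
  have hφ : ConcaveOn ℝ (Set.Icc 0 1) φ :=
    concaveOn_mul_sq_three_sub_log n.cast_nonneg ha
      (add_le_add_right (le_mul_of_one_le_left ha.le (Nat.one_le_cast.2 hS)) _)
  calc _ ≤ ∑ j ∈ range (n + 1),
          (n.choose j : ℝ) * p i ^ j * (1 - p i) ^ (n - j) * (1 / c ^ 2 * φ (j / n)) :=
        sum_le_sum fun j hj => mul_le_mul_of_nonneg_left
          (mul_sq_rfun_sub_le hS ha (mem_range_succ_iff.1 hj)) (binomial_weight_nonneg (hp i) hpi)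
    _ = 1 / c ^ 2 *
          ∑ j ∈ range (n + 1), (n.choose j : ℝ) * p i ^ j * (1 - p i) ^ (n - j) * φ (j / n) := by
        rw [mul_sum]
        exact sum_congr rfl fun j _ => by ring
    _ ≤ 1 / c ^ 2 * φ (p i) := by
        gcongr
        exact hφ.sum_binomial_mul_le (by omega) (hp i) hpi

/-- ∑ᵢ E[Pₙ(i)·(r(Pₙ(i) - 1/n) - r(Pₙ(i)))²]
  ≤ (1/(n+Sa)²)·∑ᵢ pᵢ·(3 - ln((npᵢ+a)/(n+Sa)))²,
where Pₙ(i) = Xᵢ/n ∼ Binomial(n, pᵢ)/n. -/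
theorem stmt19 (n S : ℕ) (hn : 1 ≤ n) (hS : 2 ≤ S) (a : ℝ) (ha : 0 < a)
    (p : Fin S → ℝ) (hp : ∀ i, 0 ≤ p i) (hps : ∑ i, p i = 1) :
    ∑ i, ∑ j ∈ Finset.range (n + 1),
        (n.choose j : ℝ) * p i ^ j * (1 - p i) ^ (n - j) *
          (((j : ℝ) / n) *
            (rfun n S a ((j : ℝ) / n - 1 / n) - rfun n S a ((j : ℝ) / n)) ^ 2)
      ≤ (1 / ((n : ℝ) + S * a) ^ 2) *
        ∑ i, p i * (3 - Real.log (((n : ℝ) * p i + a) / ((n : ℝ) + S * a))) ^ 2 :=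
  stmt19_general n S hn a ha p hp hps
end
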